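/- arXiv:1710.02296 — 2 statements merged into one kernel-verified Lean document; each statement's English description precedes it below -/
import Mathlib

section
/- If {(c_r, φ_r)} is an (M+1)-copy CSS in ℂ^d, then for every pure state ψ ∈ ℂ^d, the reconstructed single-copy state σ = Σ_r d_M^+ c_r |⟨φ_r|ψ⟩|^{2M} |φ_r⟩⟨φ_r| satisfies ⟨ψ|σ|ψ⟩ = (M+1)/(M+d). -/
/-!
Sandwiching the CSS identity between copies of `|ψ⟩^{⊗(M+1)}`: this vector is symmetric, so
`P_+^{M+1}` fixes it, and the identity becomes `Σ_r c_r |⟨φ_r|ψ⟩|^{2(M+1)} = 1 / d_{M+1}^+`.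
The fidelity `⟨ψ|σ|ψ⟩` is `d_M^+` times the same sum, and `d_M^+ / d_{M+1}^+ = (M+1)/(M+d)`.
-/

open scoped BigOperators

/-- `M`-fold tensor power `|φ⟩^{⊗M}` of a vector `φ ∈ ℂ^d`, as a vector on the
computational product basis `Fin M → Fin d`. -/
noncomputable def vecPow {d : ℕ} (M : ℕ) (φ : Fin d → ℂ) : (Fin M → Fin d) → ℂ :=
  fun f => ∏ i, φ (f i)

/-- Rank-one operator `|v⟩⟨v|`. -/
noncomputable def projOp {n : Type*} [Fintype n] (v : n → ℂ) : Matrix n n ℂ :=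
  Matrix.of fun i j => v i * star (v j)

/-- The orthogonal projector `P_+^M` onto the symmetric subspace of `(ℂ^d)^{⊗M}`. -/
noncomputable def symProj (d M : ℕ) : Matrix (Fin M → Fin d) (Fin M → Fin d) ℂ :=
  Matrix.of fun f g =>
    (∑ σ : Equiv.Perm (Fin M), if f = g ∘ σ then (1 : ℂ) else 0) / (Nat.factorial M : ℂ)

/-- `d_M^+ = C(M+d-1, M)`, the dimension of the symmetric subspace. -/
def dPlus (d M : ℕ) : ℕ := (M + d - 1).choose M

open Matrix

section Expectation

variable {n ι : Type*} [Fintype n] [Fintype ι]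

lemma sum_sum_star_mul_mul_eq_star_dotProduct_mulVec (A : n → n → ℂ) (w : n → ℂ) :
    ∑ a, ∑ b, star (w a) * A a b * w b = star w ⬝ᵥ Matrix.of A *ᵥ w := by
  simp only [dotProduct, mulVec, of_apply, Finset.mul_sum, Pi.star_apply, mul_assoc]

lemma star_dotProduct_projOp_mulVec (v w : n → ℂ) :
    star w ⬝ᵥ projOp v *ᵥ w = (star w ⬝ᵥ v) * (star v ⬝ᵥ w) := by
  rw [show projOp v = vecMulVec v (star v) from rfl, vecMulVec_mulVec, op_smul_eq_smul,
    dotProduct_smul, smul_eq_mul, mul_comm]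

lemma star_dotProduct_sum_smul_projOp_mulVec (v : ι → n → ℂ) (c : ι → ℂ) (w : n → ℂ) :
    star w ⬝ᵥ (∑ r, c r • projOp (v r)) *ᵥ w
      = ∑ r, c r * ((star w ⬝ᵥ v r) * (star (v r) ⬝ᵥ w)) := by
  simp only [sum_mulVec, dotProduct_sum, smul_mulVec, dotProduct_smul, smul_eq_mul,
    star_dotProduct_projOp_mulVec]

lemma sum_sum_star_mul_sum_mul_mul_star (v : ι → n → ℂ) (c : ι → ℂ) (w : n → ℂ) :
    ∑ a, ∑ b, star (w a) * (∑ r, c r * (v r a * star (v r b))) * w b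
      = ∑ r, c r * ((star w ⬝ᵥ v r) * (star (v r) ⬝ᵥ w)) := by
  have hmat : (Matrix.of fun a b => ∑ r, c r * (v r a * star (v r b)))
      = ∑ r, c r • projOp (v r) := by
    ext a b
    simp [Matrix.sum_apply, projOp]
  rw [sum_sum_star_mul_mul_eq_star_dotProduct_mulVec, hmat,
    star_dotProduct_sum_smul_projOp_mulVec]

end Expectation

section TensorPower

variable {d : ℕ}

lemma star_vecPow (n : ℕ) (w : Fin d → ℂ) : star (vecPow n w) = vecPow n (star w) := by
  ext f
  simp [vecPow, star_prod]

lemma vecPow_dotProduct_vecPow (n : ℕ) (v w : Fin d → ℂ) :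
    vecPow n v ⬝ᵥ vecPow n w = (v ⬝ᵥ w) ^ n := by
  simp only [dotProduct, vecPow, ← Finset.prod_mul_distrib, Fintype.sum_pow]

lemma star_vecPow_dotProduct_vecPow (n : ℕ) (v w : Fin d → ℂ) :
    star (vecPow n v) ⬝ᵥ vecPow n w = (star v ⬝ᵥ w) ^ n := by
  rw [star_vecPow, vecPow_dotProduct_vecPow]

lemma vecPow_comp_perm {n : ℕ} (w : Fin d → ℂ) (f : Fin n → Fin d) (σ : Equiv.Perm (Fin n)) :
    vecPow n w (f ∘ σ) = vecPow n w f :=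
  Equiv.prod_comp σ fun i => w (f i)

lemma symProj_mulVec_of_comp_perm {n : ℕ} (x : (Fin n → Fin d) → ℂ)
    (hx : ∀ f (σ : Equiv.Perm (Fin n)), x (f ∘ σ) = x f) :
    symProj d n *ᵥ x = x := by
  ext f
  have hperm : ∀ σ : Equiv.Perm (Fin n),
      ∑ g : Fin n → Fin d, (if f = g ∘ σ then x g else 0) = x f := by
    intro σ
    have hcomp : ∀ g : Fin n → Fin d, f = g ∘ σ ↔ g = f ∘ ⇑σ⁻¹ := by
      intro g
      constructor <;> rintro rfl <;> ext i <;> simp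
    simp only [hcomp, Finset.sum_ite_eq', Finset.mem_univ, if_true]
    exact hx f σ⁻¹
  simp only [mulVec, dotProduct, symProj, of_apply, div_mul_eq_mul_div, Finset.sum_mul,
    ite_mul, one_mul, zero_mul]
  rw [← Finset.sum_div, Finset.sum_comm]
  simp only [hperm, Finset.sum_const, Finset.card_univ, Fintype.card_perm, Fintype.card_fin,
    nsmul_eq_mul]
  exact mul_div_cancel_left₀ _ (Nat.cast_ne_zero.mpr n.factorial_ne_zero)

lemma star_vecPow_dotProduct_symProj_mulVec (n : ℕ) (w : Fin d → ℂ) :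
    star (vecPow n w) ⬝ᵥ symProj d n *ᵥ vecPow n w = (star w ⬝ᵥ w) ^ n := by
  rw [symProj_mulVec_of_comp_perm _ (vecPow_comp_perm w), star_vecPow_dotProduct_vecPow]

end TensorPower

lemma add_mul_dPlus (d M : ℕ) : (M + d) * dPlus d M = (M + 1) * dPlus d (M + 1) := by
  rcases d with _ | d
  · cases M <;> simp [dPlus]
  · rw [dPlus, dPlus, show M + (d + 1) - 1 = M + d by omega,
      show M + 1 + (d + 1) - 1 = M + d + 1 by omega, show M + (d + 1) = M + d + 1 by omega,
      Nat.add_one_mul_choose_eq, mul_comm]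

lemma dPlus_mul_inv_dPlus_succ {K : Type*} [Field K] [CharZero K] {d : ℕ} (hd : 0 < d)
    (M : ℕ) :
    (dPlus d M : K) * (dPlus d (M + 1) : K)⁻¹ = ((M + 1 : ℕ) : K) / ((M + d : ℕ) : K) := by
  have hpos : (dPlus d (M + 1) : K) ≠ 0 := Nat.cast_ne_zero.mpr (Nat.choose_pos (by omega)).ne'
  have hMd : ((M + d : ℕ) : K) ≠ 0 := Nat.cast_ne_zero.mpr (by omega)
  rw [← div_eq_mul_inv, div_eq_div_iff hpos hMd]
  exact_mod_cast (mul_comm _ _).trans (add_mul_dPlus d M)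

theorem css_universal_fidelity_general (d M R : ℕ)
    (φ : Fin R → Fin d → ℂ) (c : Fin R → ℝ)
    (hCSS : ∑ r, (c r : ℂ) • projOp (vecPow (M + 1) (φ r))
      = ((dPlus d (M + 1) : ℂ))⁻¹ • symProj d (M + 1))
    (ψ : Fin d → ℂ) (hψ : ∑ j, ψ j * star (ψ j) = 1) :
    ∑ a, ∑ b, star (ψ a) *
        (∑ r, (dPlus d M : ℂ) * (c r : ℂ) *
          ((∑ j, star (φ r j) * ψ j) * star (∑ j, star (φ r j) * ψ j)) ^ M *
          (φ r a * star (φ r b))) * ψ b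
      = ((M + 1 : ℕ) : ℂ) / ((M + d : ℕ) : ℂ) := by
  have hψ' : star ψ ⬝ᵥ ψ = 1 := by
    rw [← hψ]
    exact Finset.sum_congr rfl fun j _ => mul_comm _ _
  have hd : 0 < d := Nat.pos_of_ne_zero fun h => by subst h; simp at hψ'
  have hfid : ∑ r, (c r : ℂ) * ((star ψ ⬝ᵥ φ r) * (star (φ r) ⬝ᵥ ψ)) ^ (M + 1)
      = (dPlus d (M + 1) : ℂ)⁻¹ := by
    simpa only [star_dotProduct_sum_smul_projOp_mulVec, star_vecPow_dotProduct_vecPow, ← mul_pow,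
      smul_mulVec, dotProduct_smul, star_vecPow_dotProduct_symProj_mulVec, hψ', one_pow,
      smul_eq_mul, mul_one]
      using congrArg (fun A => star (vecPow (M + 1) ψ) ⬝ᵥ A *ᵥ vecPow (M + 1) ψ) hCSS
  rw [← dPlus_mul_inv_dPlus_succ hd, ← hfid, Finset.mul_sum, sum_sum_star_mul_sum_mul_mul_star]
  refine Finset.sum_congr rfl fun r _ => ?_
  rw [star_dotProduct ψ (φ r)]
  simp only [dotProduct, Pi.star_apply]
  ring

/-- Universal fidelity of reconstruction from an `(M+1)`-copy CSS: for every
unit vector `ψ`, the reconstructed single-copy state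
`σ = Σ_r d_M^+ c_r |⟨φ_r|ψ⟩|^{2M} |φ_r⟩⟨φ_r|` satisfies
`⟨ψ|σ|ψ⟩ = (M+1)/(M+d)`. -/
theorem css_universal_fidelity (d M R : ℕ)
    (φ : Fin R → Fin d → ℂ) (c : Fin R → ℝ)
    (hunit : ∀ r, ∑ j, φ r j * star (φ r j) = 1)
    (hc : ∀ r, 0 ≤ c r)
    (hCSS : ∑ r, (c r : ℂ) • projOp (vecPow (M + 1) (φ r))
      = ((dPlus d (M + 1) : ℂ))⁻¹ • symProj d (M + 1))
    (ψ : Fin d → ℂ) (hψ : ∑ j, ψ j * star (ψ j) = 1) :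
    ∑ a, ∑ b, star (ψ a) *
        (∑ r, (dPlus d M : ℂ) * (c r : ℂ) *
          ((∑ j, star (φ r j) * ψ j) * star (∑ j, star (φ r j) * ψ j)) ^ M *
          (φ r a * star (φ r b))) * ψ b
      = ((M + 1 : ℕ) : ℂ) / ((M + d : ℕ) : ℂ) :=
  css_universal_fidelity_general d M R φ c hCSS ψ hψ
end

section
/- For d an odd prime and the MUB states defined via |ψ_t^k⟩ = (1/√d) Σ_j ω^{t(d-j)} ω^{-k s_j}|j⟩ (k ≥ 1) and |ψ_t^0⟩ = |t⟩, the operator Q = (1/(d(d+1))) Σ_{k=0}^{d} Σ_{t=0}^{d-1} (|ψ_t^k⟩⟨ψ_t^k|)^{⊗2} is diagonal in the product computational basis of (ℂ^d)^{⊗2}, with ⟨j_1 j_2| Q |j_3 j_4⟩ = 0 whenever {j_1,j_2} ≠ {j_3,j_4} as multisets. -/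
open scoped BigOperators

/-- `s_j = j + (j+1) + ⋯ + (d-1)`. -/
def sIdx (d j : ℕ) : ℕ := ∑ i ∈ Finset.Ico j d, i

/-- The complete set of `d+1` mutually unbiased bases in `ℂ^d` (`d` an odd
prime): `|ψ_t^0⟩ = |t⟩` and, for `k ≥ 1`,
`|ψ_t^k⟩ = (1/√d) Σ_j ω^{t(d-j)} ω^{-k s_j} |j⟩` with `ω = e^{2πi/d}`. -/
noncomputable def mub (d : ℕ) (k : Fin (d + 1)) (t : Fin d) : Fin d → ℂ :=
  fun j =>
    if k.val = 0 then (if j = t then 1 else 0)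
    else (((Real.sqrt d)⁻¹ : ℝ) : ℂ) *
      Complex.exp (2 * Real.pi * Complex.I * ((t.val * (d - j.val) : ℕ) : ℂ) / d) *
      Complex.exp (-(2 * Real.pi * Complex.I * ((k.val * sIdx d j.val : ℕ) : ℂ) / d))

/-!
For `k ≥ 1` the entries of `ψ_t^k` are `d^{-1/2}` times values of the standard additive character
`ψ` of `ZMod d`, since `t (d - j) ≡ -t j`. Hence the `⟨j₁ j₂|·|j₃ j₄⟩` entry of the `k`-th block is
`d⁻² ∑_t ψ(t A + k B)` with `A = (j₃ + j₄) - (j₁ + j₂)` and `B = s_{j₃} + s_{j₄} - s_{j₁} - s_{j₂}`.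
Summing over `t` kills it unless `A = 0`, and then summing over `k = 1, …, d` kills it unless
`B = 0`. As `2 s_j ≡ j - j²`, `A = B = 0` says that the two pairs have equal sums and equal sums of
squares in the field `ZMod d`, where `2 ≠ 0`; so they agree as multisets. The computational basis
`k = 0` only contributes when `j₁ = j₂ = j₃ = j₄`.
-/

open Complex Finset ZMod

theorem injective_natCast_fin_val (N : ℕ) :
    Function.Injective fun t : Fin N => (t.val : ZMod N) := by
  intro a b hab
  have hval := congrArg ZMod.val hab
  simp only [val_cast_of_lt a.isLt, val_cast_of_lt b.isLt] at hval
  exact Fin.ext hval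

theorem sum_fin_natCast_zmod {N : ℕ} [NeZero N] {M : Type*} [AddCommMonoid M]
    (f : ZMod N → M) : ∑ t : Fin N, f t.val = ∑ x : ZMod N, f x :=
  Fintype.sum_bijective _ ((Fintype.bijective_iff_injective_and_card _).mpr
    ⟨injective_natCast_fin_val N, by simp⟩) _ _ fun _ => rfl

theorem exp_two_pi_I_mul_natCast_div {N : ℕ} [NeZero N] (n : ℕ) :
    exp (2 * Real.pi * I * (n : ℂ) / N) = stdAddChar (n : ZMod N) := by
  simpa using (stdAddChar_coe (N := N) n).symm

theorem ofReal_mul_stdAddChar_mul_mul_star {N : ℕ} [NeZero N] (r : ℝ) (a b c e : ZMod N) :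
    r * stdAddChar (-a) * (r * stdAddChar (-b)) *
        star (r * stdAddChar (-c) * (r * stdAddChar (-e))) =
      (r ^ 4 : ℝ) * stdAddChar (c + e - (a + b)) := by
  simp only [star_mul', star_def, conj_ofReal, ← AddChar.map_neg_eq_conj, neg_neg]
  rw [sub_eq_add_neg, neg_add, AddChar.map_add_eq_mul, AddChar.map_add_eq_mul,
    AddChar.map_add_eq_mul]
  push_cast
  ring

theorem sum_stdAddChar_mul_add {N : ℕ} [NeZero N] {a : ZMod N} (ha : a ≠ 0) (c : ZMod N) :
    ∑ t : Fin N, stdAddChar ((t.val : ZMod N) * a + c) = 0 := by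
  simp_rw [AddChar.map_add_eq_mul, ← sum_mul]
  rw [sum_fin_natCast_zmod fun x => stdAddChar (x * a),
    AddChar.sum_mulShift a (isPrimitive_stdAddChar N), if_neg ha, Nat.cast_zero, zero_mul]

theorem sum_sum_stdAddChar_eq_zero {N : ℕ} [NeZero N] {A B : ZMod N} (hAB : A ≠ 0 ∨ B ≠ 0) :
    ∑ k : Fin N, ∑ t : Fin N,
      stdAddChar ((t.val : ZMod N) * A + ((k.val : ZMod N) + 1) * B) = 0 := by
  by_cases hA : A = 0
  · have hB : B ≠ 0 := hAB.resolve_left (not_not.mpr hA)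
    simp only [hA, mul_zero, zero_add, sum_const, card_univ, Fintype.card_fin, ← smul_sum,
      add_one_mul]
    rw [sum_stdAddChar_mul_add hB, smul_zero]
  · exact sum_eq_zero fun k _ => sum_stdAddChar_mul_add hA _

theorem pair_eq_of_add_eq_of_sq_add_sq_eq {R : Type*} [CommRing R] [IsDomain R]
    (h2 : (2 : R) ≠ 0) {a b c e : R} (hsum : a + b = c + e)
    (hsq : a ^ 2 + b ^ 2 = c ^ 2 + e ^ 2) : ({a, b} : Multiset R) = {c, e} := by
  have hprod : a * b = c * e :=
    mul_left_cancel₀ h2 (by linear_combination (a + b + c + e) * hsum - hsq)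
  have hroot : (c - a) * (c - b) = 0 := by linear_combination (-c) * hsum + hprod
  rcases mul_eq_zero.mp hroot with hca | hcb
  · have hc : c = a := by linear_combination hca
    rw [hc, show e = b by linear_combination -hsum - hc]
  · have hc : c = b := by linear_combination hcb
    rw [hc, show e = a by linear_combination -hsum - hc, Multiset.pair_comm]

theorem two_mul_sum_range_id {R : Type*} [CommRing R] (n : ℕ) :
    2 * ∑ i ∈ range n, (i : R) = n ^ 2 - n := by
  induction n with
  | zero => simp
  | succ n ih => rw [sum_range_succ, mul_add, ih]; push_cast; ring

theorem two_mul_natCast_sIdx {d j : ℕ} (hj : j ≤ d) : 2 * (sIdx d j : ZMod d) = j - j ^ 2 := by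
  rw [sIdx, Nat.cast_sum, sum_Ico_eq_sub _ hj, mul_sub, two_mul_sum_range_id,
    two_mul_sum_range_id, natCast_self]
  ring

def mubPhase (d k : ℕ) (t j : Fin d) : ZMod d := (t.val * j.val + k * sIdx d j.val : ℕ)

def pairSum {d : ℕ} (a b : Fin d) : ZMod d := (a.val + b.val : ℕ)

def pairSIdxSum {d : ℕ} (a b : Fin d) : ZMod d := (sIdx d a.val + sIdx d b.val : ℕ)

theorem mubPhase_add_mubPhase (d k : ℕ) (t a b : Fin d) :
    mubPhase d k t a + mubPhase d k t b = t.val * pairSum a b + k * pairSIdxSum a b := by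
  simp only [mubPhase, pairSum, pairSIdxSum]
  push_cast
  ring

theorem pair_eq_of_pairSum_eq_of_pairSIdxSum_eq {d : ℕ} [Fact d.Prime] (h2 : (2 : ZMod d) ≠ 0)
    {a b c e : Fin d} (hsum : pairSum a b = pairSum c e)
    (hs : pairSIdxSum a b = pairSIdxSum c e) : ({a, b} : Multiset (Fin d)) = {c, e} := by
  apply Multiset.map_injective (injective_natCast_fin_val d)
  simp only [Multiset.insert_eq_cons, Multiset.map_cons, Multiset.map_singleton]
  simp only [pairSum, pairSIdxSum, Nat.cast_add] at hsum hs
  have two_mul_sIdx (j : Fin d) := two_mul_natCast_sIdx j.isLt.le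
  refine pair_eq_of_add_eq_of_sq_add_sq_eq h2 hsum ?_
  linear_combination hsum - 2 * hs + two_mul_sIdx a + two_mul_sIdx b - two_mul_sIdx c -
    two_mul_sIdx e

theorem projOp_vecPow_two_apply {d : ℕ} (φ : Fin d → ℂ) (a b c e : Fin d) :
    projOp (vecPow 2 φ) ![a, b] ![c, e] = φ a * φ b * star (φ c * φ e) := by
  simp [projOp, vecPow, Fin.prod_univ_two]

theorem mub_zero_apply (d : ℕ) (t j : Fin d) : mub d 0 t j = if j = t then 1 else 0 := by
  simp [mub]

theorem sum_mub_zero_mul_mul_star {d : ℕ} {j₁ j₂ j₃ j₄ : Fin d}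
    (h : ({j₁, j₂} : Multiset (Fin d)) ≠ {j₃, j₄}) :
    ∑ t, mub d 0 t j₁ * mub d 0 t j₂ * star (mub d 0 t j₃ * mub d 0 t j₄) = 0 := by
  refine sum_eq_zero fun t _ => ?_
  by_contra hne
  simp only [mub_zero_apply] at hne
  split_ifs at hne with h₁ h₂ h₃ h₄
  · exact h (by rw [h₁, h₂, h₃, h₄])
  all_goals simp at hne

theorem mub_apply_of_ne_zero {d : ℕ} [NeZero d] {k : Fin (d + 1)} (hk : k ≠ 0) (t j : Fin d) :
    mub d k t j = (((√d)⁻¹ : ℝ) : ℂ) * stdAddChar (-mubPhase d k t j) := by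
  rw [mub, if_neg (Fin.val_ne_zero_iff.mpr hk), exp_neg, exp_two_pi_I_mul_natCast_div,
    exp_two_pi_I_mul_natCast_div, ← AddChar.map_neg_eq_inv, mul_assoc,
    ← AddChar.map_add_eq_mul]
  congr 2
  simp only [mubPhase]
  push_cast [Nat.cast_sub j.isLt.le, natCast_self]
  ring

theorem mub_mul_mul_star_of_ne_zero {d : ℕ} [NeZero d] {k : Fin (d + 1)} (hk : k ≠ 0)
    (t j₁ j₂ j₃ j₄ : Fin d) :
    mub d k t j₁ * mub d k t j₂ * star (mub d k t j₃ * mub d k t j₄) =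
      ((d : ℂ) ^ 2)⁻¹ * stdAddChar ((t.val : ZMod d) * (pairSum j₃ j₄ - pairSum j₁ j₂) +
        (k.val : ZMod d) * (pairSIdxSum j₃ j₄ - pairSIdxSum j₁ j₂)) := by
  rw [mub_apply_of_ne_zero hk, mub_apply_of_ne_zero hk, mub_apply_of_ne_zero hk,
    mub_apply_of_ne_zero hk, ofReal_mul_stdAddChar_mul_mul_star, inv_pow,
    show 4 = 2 * 2 from rfl, pow_mul, Real.sq_sqrt d.cast_nonneg,
    mubPhase_add_mubPhase, mubPhase_add_mubPhase]
  push_cast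
  congr 2
  ring

/-- For `d` an odd prime, the operator
`Q = (1/(d(d+1))) Σ_{k,t} (|ψ_t^k⟩⟨ψ_t^k|)^{⊗2}` is diagonal in the product
computational basis: `⟨j₁j₂|Q|j₃j₄⟩ = 0` whenever `{j₁,j₂} ≠ {j₃,j₄}` as
multisets. -/
theorem mub_Q_diagonal (d : ℕ) (hp : Nat.Prime d) (hodd : Odd d)
    (j1 j2 j3 j4 : Fin d)
    (h : ({j1, j2} : Multiset (Fin d)) ≠ ({j3, j4} : Multiset (Fin d))) :
    (((d * (d + 1) : ℕ) : ℂ)⁻¹ •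
        ∑ k : Fin (d + 1), ∑ t : Fin d, projOp (vecPow 2 (mub d k t)))
      ![j1, j2] ![j3, j4] = 0 := by
  have : Fact d.Prime := ⟨hp⟩
  have h2 : (2 : ZMod d) ≠ 0 := Ring.two_ne_zero <| by
    rw [ZMod.ringChar_zmod_n]
    rintro rfl
    exact (by decide : ¬Odd 2) hodd
  have hAB : pairSum j3 j4 - pairSum j1 j2 ≠ 0 ∨ pairSIdxSum j3 j4 - pairSIdxSum j1 j2 ≠ 0 := by
    by_contra! hAB
    exact h (pair_eq_of_pairSum_eq_of_pairSIdxSum_eq h2 (sub_eq_zero.mp hAB.1).symm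
      (sub_eq_zero.mp hAB.2).symm)
  simp only [Matrix.smul_apply, Matrix.sum_apply, projOp_vecPow_two_apply, smul_eq_mul]
  rw [Fin.sum_univ_succ, sum_mub_zero_mul_mul_star h, zero_add]
  simp only [mub_mul_mul_star_of_ne_zero (Fin.succ_ne_zero _), Fin.val_succ, Nat.cast_succ,
    ← mul_sum, sum_sum_stdAddChar_eq_zero hAB, mul_zero]
end
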